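/- arXiv:1009.2172 — 3 statements merged into one kernel-verified Lean document; each statement's English description precedes it below -/
import Mathlib

section
/- Let {x₁, ..., xₙ} be a linearly independent subset of a cone normed linear space (V, ‖·‖_c) over a Banach space E with normal cone C of normal constant K. Then there exists c ∈ int C such that for all real scalars α₁, ..., αₙ: ‖α₁x₁ + ⋯ + αₙxₙ‖_c ≥ c·(|α₁| + ⋯ + |αₙ|). -/
open Filter Topology

variable {E V : Type*}

section
variable [NormedAddCommGroup E] [NormedSpace ℝ E] [CompleteSpace E]
variable [AddCommGroup V] [Module ℝ V]

/-- `C` is a cone in the sense of Huang and Zhang. -/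
structure IsCone (C : Set E) : Prop where
  closed : IsClosed C
  combo_mem : ∀ a b : ℝ, 0 ≤ a → 0 ≤ b → ∀ x ∈ C, ∀ y ∈ C, a • x + b • y ∈ C
  mem_or_neg_mem : ∀ x : E, x ∈ C ∨ -x ∈ C

/-- `C` is a normal cone with normal constant `K`:
`θ ≤ a ≤ b` implies `‖a‖ ≤ K * ‖b‖`. -/
structure IsNormalCone (C : Set E) (K : ℝ) extends IsCone C : Prop where
  K_pos : 0 < K
  normal : ∀ a b : E, a ∈ C → b - a ∈ C → ‖a‖ ≤ K * ‖b‖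

/-- `cn` is a cone norm on `V` with values in `E`, with respect to the cone `C`.
The order `u ≤ v` on `E` is `v - u ∈ C`. -/
structure IsConeNorm (C : Set E) (cn : V → E) : Prop where
  nonneg : ∀ x, cn x ∈ C
  eq_zero_iff : ∀ x, cn x = 0 ↔ x = 0
  smul : ∀ (α : ℝ) (x : V), cn (α • x) = |α| • cn x
  triangle : ∀ x y : V, (cn x + cn y) - cn (x + y) ∈ C

/-- Convergence with respect to the cone norm: for every `ε ≫ θ`
(`ε ∈ int C`), eventually `‖xₙ - l‖_c ≪ ε`. -/
def ConeTendsto (C : Set E) (cn : V → E) (x : ℕ → V) (l : V) : Prop :=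
  ∀ ε ∈ interior C, ∃ n₀, ∀ n ≥ n₀, ε - cn (x n - l) ∈ interior C

/-- Cauchy with respect to the cone norm. -/
def ConeCauchy (C : Set E) (cn : V → E) (x : ℕ → V) : Prop :=
  ∀ ε ∈ interior C, ∃ n₀, ∀ m ≥ n₀, ∀ n ≥ n₀, ε - cn (x n - x m) ∈ interior C

/-! Since every vector is comparable with `θ`, a normal cone `C` with an interior point `e ≠ θ`
is the ray `{t • e | t ≥ 0}` (normality makes `C` pointed, and connectedness of `ℝ` finds, for
each `x`, a `t` with `t • e ≤ x ≤ t • e`). Hence `E = ℝ e`, and `‖x‖_c = N x • e` for a genuine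
norm `N` on `V`. On the span of the linearly independent `xᵢ` this norm dominates a positive
multiple `m` of the `ℓ¹` norm, by compactness of the unit sphere, and `c = m • e` works. -/

namespace IsCone

variable {F : Type*} [NormedAddCommGroup F] [NormedSpace ℝ F] {C : Set F}

theorem smul_mem (hC : IsCone C) {t : ℝ} (ht : 0 ≤ t) {x : F} (hx : x ∈ C) : t • x ∈ C := by
  simpa using hC.combo_mem t 0 ht le_rfl x hx x hx

open scoped Pointwise in
theorem smul_mem_interior (hC : IsCone C) {t : ℝ} (ht : 0 < t) {x : F} (hx : x ∈ interior C) :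
    t • x ∈ interior C := by
  have hsub : t • C ⊆ C := by
    rintro _ ⟨y, hy, rfl⟩
    exact hC.smul_mem ht.le hy
  exact interior_mono hsub (by rw [interior_smul₀ ht.ne']; exact Set.smul_mem_smul_set hx)

theorem exists_smul_sub_mem (hC : IsCone C) {e : F} (he : e ∈ interior C) (x : F) :
    ∃ t : ℝ, t • e - x ∈ C := by
  have hnear : ∀ᶠ s : ℝ in 𝓝 0, e - s • x ∈ C := by
    have hcont : Continuous fun s : ℝ => e - s • x := by fun_prop
    exact hcont.continuousAt.eventually (by simpa using mem_interior_iff_mem_nhds.mp he)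
  obtain ⟨s, hs, hsC⟩ := (eventually_mem_nhdsWithin.and (hnear.filter_mono nhdsWithin_le_nhds) :
    ∀ᶠ s in 𝓝[>] (0 : ℝ), s ∈ Set.Ioi 0 ∧ e - s • x ∈ C).exists
  have hs : 0 < s := hs
  refine ⟨s⁻¹, ?_⟩
  simpa [smul_sub, smul_smul, hs.ne'] using hC.smul_mem (inv_nonneg.mpr hs.le) hsC

end IsCone

namespace IsNormalCone

variable {F : Type*} [NormedAddCommGroup F] [NormedSpace ℝ F] {C : Set F} {K : ℝ} {e : F}

theorem eq_zero_of_mem_of_neg_mem (hC : IsNormalCone C K) {x : F} (hx : x ∈ C) (hnx : -x ∈ C) :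
    x = 0 :=
  norm_le_zero_iff.mp (by simpa using hC.normal x 0 hx (by simpa using hnx))

theorem exists_smul_eq (hC : IsNormalCone C K) (he : e ∈ interior C) (x : F) :
    ∃ t : ℝ, t • e = x := by
  let above : Set ℝ := {t | t • e - x ∈ C}
  let below : Set ℝ := {t | x - t • e ∈ C}
  have hcover : Set.univ ⊆ above ∪ below := fun t _ => by
    simpa [above, below] using hC.mem_or_neg_mem (t • e - x)
  have habove : (Set.univ ∩ above).Nonempty := by
    obtain ⟨t, ht⟩ := hC.exists_smul_sub_mem he x
    exact ⟨t, trivial, ht⟩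
  have hbelow : (Set.univ ∩ below).Nonempty := by
    obtain ⟨t, ht⟩ := hC.exists_smul_sub_mem he (-x)
    exact ⟨-t, trivial, by simpa [below, sub_eq_add_neg, add_comm] using ht⟩
  obtain ⟨t, -, hta, htb⟩ := isPreconnected_closed_iff.mp isPreconnected_univ above below
    (hC.closed.preimage (by fun_prop)) (hC.closed.preimage (by fun_prop)) hcover habove hbelow
  have htb' : -(t • e - x) ∈ C := by rw [neg_sub]; exact htb
  exact ⟨t, sub_eq_zero.mp (hC.eq_zero_of_mem_of_neg_mem hta htb')⟩

theorem smul_mem_iff (hC : IsNormalCone C K) (he : e ∈ C) (he0 : e ≠ 0) {t : ℝ} :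
    t • e ∈ C ↔ 0 ≤ t := by
  refine ⟨fun ht => ?_, fun ht => hC.smul_mem ht he⟩
  by_contra! hneg
  have hneg' : -(t • e) ∈ C := by simpa using hC.smul_mem (neg_nonneg.mpr hneg.le) he
  exact (smul_eq_zero.mp (hC.eq_zero_of_mem_of_neg_mem ht hneg')).elim hneg.ne he0

theorem exists_linearMap_smul_eq (hC : IsNormalCone C K) (he : e ∈ interior C) (he0 : e ≠ 0) :
    ∃ φ : F →ₗ[ℝ] ℝ, ∀ x, φ x • e = x := by
  let ray : ℝ ≃ₗ[ℝ] F := LinearEquiv.ofBijective (LinearMap.toSpanSingleton ℝ F e)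
    ⟨smul_left_injective ℝ he0, hC.exists_smul_eq he⟩
  exact ⟨ray.symm.toLinearMap, ray.apply_symm_apply⟩

theorem mem_iff_of_smul_eq (hC : IsNormalCone C K) (he : e ∈ C) (he0 : e ≠ 0) {φ : F →ₗ[ℝ] ℝ}
    (hφ : ∀ x, φ x • e = x) (x : F) : x ∈ C ↔ 0 ≤ φ x := by
  conv_lhs => rw [← hφ x]
  exact hC.smul_mem_iff he he0

end IsNormalCone

def IsConeNorm.toSeminorm {F W : Type*} [NormedAddCommGroup F] [NormedSpace ℝ F] [AddCommGroup W]
    [Module ℝ W] {C : Set F} {cn : W → F} (hcn : IsConeNorm C cn) (φ : F →ₗ[ℝ] ℝ)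
    (hφ : ∀ x ∈ C, 0 ≤ φ x) : Seminorm ℝ W :=
  Seminorm.of (fun x => φ (cn x))
    (fun x y => by simpa using hφ _ (hcn.triangle x y))
    (fun a x => by rw [hcn.smul, map_smul, smul_eq_mul, Real.norm_eq_abs])

@[simp]
theorem IsConeNorm.toSeminorm_apply {F W : Type*} [NormedAddCommGroup F] [NormedSpace ℝ F]
    [AddCommGroup W] [Module ℝ W] {C : Set F} {cn : W → F} (hcn : IsConeNorm C cn)
    (φ : F →ₗ[ℝ] ℝ) (hφ : ∀ x ∈ C, 0 ≤ φ x) (x : W) : hcn.toSeminorm φ hφ x = φ (cn x) :=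
  rfl

namespace Seminorm

theorem exists_pos_mul_norm_le {X : Type*} [NormedAddCommGroup X] [NormedSpace ℝ X]
    [FiniteDimensional ℝ X] (p : Seminorm ℝ X) (hp : ∀ x, p x = 0 → x = 0) :
    ∃ m > 0, ∀ x, m * ‖x‖ ≤ p x := by
  have hcont : Continuous p := p.convexOn.locallyLipschitz.continuous
  have hsphere : ∀ x ∈ Metric.sphere (0 : X) 1, 0 < p x := fun x hx =>
    (apply_nonneg p x).lt_of_ne' fun h => by simp [hp x h] at hx
  obtain ⟨m, hm, hmp⟩ := (isCompact_sphere (0 : X) 1).exists_forall_le' hcont.continuousOn hsphere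
  refine ⟨m, hm, fun x => ?_⟩
  rcases eq_or_ne x 0 with rfl | hx
  · simp
  have hnx : 0 < ‖x‖ := norm_pos_iff.mpr hx
  have hunit := hmp (‖x‖⁻¹ • x) (by simp [norm_smul, hnx.ne'])
  rw [map_smul_eq_mul, norm_inv, norm_norm, le_inv_mul_iff₀ hnx] at hunit
  linarith

theorem exists_pos_mul_sum_abs_le {W : Type*} [AddCommGroup W] [Module ℝ W] (p : Seminorm ℝ W)
    (hp : ∀ x, p x = 0 → x = 0) {ι : Type*} [Fintype ι] {v : ι → W}
    (hv : LinearIndependent ℝ v) :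
    ∃ m > 0, ∀ α : ι → ℝ, m * ∑ i, |α i| ≤ p (∑ i, α i • v i) := by
  let q : Seminorm ℝ (PiLp 1 fun _ : ι => ℝ) :=
    p.comp ((Fintype.linearCombination ℝ v).comp (WithLp.linearEquiv 1 ℝ (ι → ℝ)).toLinearMap)
  have hq : ∀ x, q x = 0 → x = 0 := fun x hx => by
    have hcomb := hp _ hx
    simp only [LinearMap.coe_comp, LinearEquiv.coe_coe, Function.comp_apply,
      WithLp.linearEquiv_apply, Fintype.linearCombination_apply] at hcomb
    ext i
    exact Fintype.linearIndependent_iff.mp hv _ hcomb i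
  obtain ⟨m, hm, hmq⟩ := q.exists_pos_mul_norm_le hq
  refine ⟨m, hm, fun α => ?_⟩
  simpa [q, PiLp.norm_eq_of_L1, Fintype.linearCombination_apply] using hmq (WithLp.toLp 1 α)

end Seminorm

theorem cone_norm_linearIndependent_bound (C : Set E) (K : ℝ)
    (hC : IsNormalCone C K) (hint : (interior C).Nonempty)
    (cn : V → E) (hcn : IsConeNorm C cn)
    (n : ℕ) (v : Fin n → V) (hv : LinearIndependent ℝ v) :
    ∃ c ∈ interior C, ∀ α : Fin n → ℝ,
      cn (∑ i, α i • v i) - (∑ i, |α i|) • c ∈ C := by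
  obtain ⟨e, he⟩ := hint
  by_cases h0 : (0 : E) ∈ interior C
  · exact ⟨0, h0, fun α => by simpa using hcn.nonneg _⟩
  have he0 : e ≠ 0 := by rintro rfl; exact h0 he
  obtain ⟨φ, hφ⟩ := hC.exists_linearMap_smul_eq he he0
  have hφC := hC.mem_iff_of_smul_eq (interior_subset he) he0 hφ
  have hφe : φ e = 1 := smul_left_injective ℝ he0 (by simpa using hφ e)
  let p := hcn.toSeminorm φ fun x => (hφC x).mp
  have hp : ∀ x, p x = 0 → x = 0 := fun x hx =>
    (hcn.eq_zero_iff x).mp (by rw [← hφ (cn x), show φ (cn x) = 0 from hx, zero_smul])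
  obtain ⟨m, hm, hmp⟩ := p.exists_pos_mul_sum_abs_le hp hv
  refine ⟨m • e, hC.smul_mem_interior hm he, fun α => ?_⟩
  rw [hφC, map_sub, map_smul, map_smul, hφe, smul_eq_mul, smul_eq_mul, mul_one, sub_nonneg,
    mul_comm]
  simpa [p] using hmp α
end
end

section
/- Every finite dimensional cone normed linear space over a Banach space E with normal cone of normal constant K is cone complete: every Cauchy sequence (with respect to the cone norm) converges to an element of the space. -/
/-!
By normality, `v ↦ ‖cn v‖` is comparable with any norm on the finite dimensional space `V`.
The triangle inequality in the cone order, expanded in a basis, gives `‖cn v‖ ≤ c ‖v‖`; hence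
`cn` is continuous, and compactness of the unit sphere gives `m ‖v‖ ≤ ‖cn v‖` with `m > 0`.
For a normal cone with nonempty interior, a family `a` in `C` satisfies `a ≪ ε` eventually for
every `ε ≫ 0` exactly when `a → 0` in norm. So cone Cauchy sequences and cone limits are the
Cauchy sequences and limits for a norm on `V`, which is complete.
-/

open Filter Topology

variable {E V : Type*}

section Topology

variable {G α : Type*} [TopologicalSpace G] [AddGroup G] [ContinuousSub G]

theorem Filter.Tendsto.eventually_sub_mem_interior {l : Filter α} {f : α → G}
    (hf : Tendsto f l (𝓝 0)) {S : Set G} {ε : G} (hε : ε ∈ interior S) :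
    ∀ᶠ a in l, ε - f a ∈ interior S := by
  have hlim : Tendsto (fun a => ε - f a) l (𝓝 ε) := by
    simpa using tendsto_const_nhds.sub hf
  exact hlim.eventually (isOpen_interior.mem_nhds hε)

end Topology

section Cone

open Pointwise

variable {α : Type*} [NormedAddCommGroup E] [NormedSpace ℝ E] {C : Set E} {K : ℝ}

theorem IsCone.add_mem (hC : IsCone C) {x y : E} (hx : x ∈ C) (hy : y ∈ C) : x + y ∈ C := by
  simpa using hC.combo_mem 1 1 zero_le_one zero_le_one x hx y hy

theorem IsCone.smul_mem_interior_s13 (hC : IsCone C) {t : ℝ} (ht : 0 < t) {p : E}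
    (hp : p ∈ interior C) : t • p ∈ interior C := by
  have hsub : t • C ⊆ C := by
    rintro _ ⟨y, hy, rfl⟩
    simpa using hC.combo_mem t 0 ht.le le_rfl y hy y hy
  refine interior_mono hsub ?_
  rw [interior_smul₀ ht.ne']
  exact Set.smul_mem_smul_set hp

/-- For an interior point `p`, normality turns `t • p - f a ∈ C` into `‖f a‖ ≤ K t ‖p‖`. -/
theorem IsNormalCone.tendsto_nhds_zero (hC : IsNormalCone C K) (hint : (interior C).Nonempty)
    {l : Filter α} {f : α → E} (hf₀ : ∀ a, f a ∈ C)
    (hf : ∀ ε ∈ interior C, ∀ᶠ a in l, ε - f a ∈ interior C) : Tendsto f l (𝓝 0) := by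
  obtain ⟨p, hp⟩ := hint
  rw [NormedAddGroup.tendsto_nhds_zero]
  intro δ hδ
  have hK := hC.K_pos
  set t := δ / (K * (‖p‖ + 1)) with ht_def
  have ht : 0 < t := by positivity
  filter_upwards [hf (t • p) (hC.smul_mem_interior_s13 ht hp)] with a ha
  calc ‖f a‖ ≤ K * ‖t • p‖ := hC.normal _ _ (hf₀ a) (interior_subset ha)
    _ = δ * (‖p‖ / (‖p‖ + 1)) := by
      rw [norm_smul, Real.norm_of_nonneg ht.le, ht_def]
      field_simp
    _ < δ := mul_lt_of_lt_one_right hδ ((div_lt_one (by positivity)).2 (lt_add_one _))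

variable [AddCommGroup V] [Module ℝ V] {cn : V → E}

theorem IsConeNorm.map_zero (hcn : IsConeNorm C cn) : cn 0 = 0 :=
  (hcn.eq_zero_iff 0).2 rfl

theorem IsConeNorm.map_neg (hcn : IsConeNorm C cn) (x : V) : cn (-x) = cn x := by
  simpa using hcn.smul (-1) x

theorem IsConeNorm.norm_smul (hcn : IsConeNorm C cn) (a : ℝ) (x : V) :
    ‖cn (a • x)‖ = |a| * ‖cn x‖ := by
  rw [hcn.smul, _root_.norm_smul, Real.norm_eq_abs, abs_abs]

theorem IsConeNorm.sub_sum_mem (hC : IsCone C) (hcn : IsConeNorm C cn) {ι : Type*}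
    (s : Finset ι) (f : ι → V) : ∑ i ∈ s, cn (f i) - cn (∑ i ∈ s, f i) ∈ C := by
  classical
  induction s using Finset.induction_on with
  | empty => simpa [hcn.map_zero] using hcn.nonneg 0
  | insert a s ha ih =>
    rw [Finset.sum_insert ha, Finset.sum_insert ha]
    convert hC.add_mem (hcn.triangle (f a) (∑ i ∈ s, f i)) ih using 1
    abel

theorem IsConeNorm.norm_sum_le (hC : IsNormalCone C K) (hcn : IsConeNorm C cn) {ι : Type*}
    (s : Finset ι) (f : ι → V) : ‖cn (∑ i ∈ s, f i)‖ ≤ K * ∑ i ∈ s, ‖cn (f i)‖ :=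
  calc ‖cn (∑ i ∈ s, f i)‖ ≤ K * ‖∑ i ∈ s, cn (f i)‖ :=
        hC.normal _ _ (hcn.nonneg _) (hcn.sub_sum_mem hC.toIsCone s f)
    _ ≤ K * ∑ i ∈ s, ‖cn (f i)‖ :=
        mul_le_mul_of_nonneg_left (_root_.norm_sum_le _ _) hC.K_pos.le

/-- Both `cn x + cn (x - y) - cn y` and `cn y + cn (x - y) - cn x` lie in `C` and add up to
`2 • cn (x - y)`, so normality bounds the first by `2 K ‖cn (x - y)‖`. -/
theorem IsConeNorm.norm_sub_le (hC : IsNormalCone C K) (hcn : IsConeNorm C cn) (x y : V) :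
    ‖cn x - cn y‖ ≤ (2 * K + 1) * ‖cn (x - y)‖ := by
  have h₁ : cn x + cn (x - y) - cn y ∈ C := by
    simpa [← hcn.map_neg (x - y)] using hcn.triangle x (y - x)
  have h₂ : (2 : ℝ) • cn (x - y) - (cn x + cn (x - y) - cn y) ∈ C := by
    convert hcn.triangle y (x - y) using 1
    rw [two_smul, add_sub_cancel]
    abel
  have hbound : ‖cn x + cn (x - y) - cn y‖ ≤ 2 * K * ‖cn (x - y)‖ := by
    simpa [_root_.norm_smul, mul_assoc, mul_left_comm K] using hC.normal _ _ h₁ h₂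
  calc ‖cn x - cn y‖ = ‖(cn x + cn (x - y) - cn y) - cn (x - y)‖ := by congr 1; abel
    _ ≤ 2 * K * ‖cn (x - y)‖ + ‖cn (x - y)‖ :=
        (_root_.norm_sub_le _ _).trans (add_le_add_left hbound _)
    _ = (2 * K + 1) * ‖cn (x - y)‖ := by ring

theorem IsConeNorm.coneTendsto_iff (hC : IsNormalCone C K) (hint : (interior C).Nonempty)
    (hcn : IsConeNorm C cn) {x : ℕ → V} {l : V} :
    ConeTendsto C cn x l ↔ Tendsto (fun n => cn (x n - l)) atTop (𝓝 0) := by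
  simp only [ConeTendsto, ← eventually_atTop]
  exact ⟨hC.tendsto_nhds_zero hint (fun n => hcn.nonneg _),
    fun h _ hε => h.eventually_sub_mem_interior hε⟩

theorem IsConeNorm.coneCauchy_iff (hC : IsNormalCone C K) (hint : (interior C).Nonempty)
    (hcn : IsConeNorm C cn) {x : ℕ → V} :
    ConeCauchy C cn x ↔ Tendsto (fun p : ℕ × ℕ => cn (x p.2 - x p.1)) atTop (𝓝 0) := by
  have hev : ∀ ε, (∃ n₀, ∀ m ≥ n₀, ∀ n ≥ n₀, ε - cn (x n - x m) ∈ interior C) ↔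
      ∀ᶠ p : ℕ × ℕ in atTop, ε - cn (x p.2 - x p.1) ∈ interior C :=
    fun ε => by rw [eventually_atTop_prod_self']
  simp only [ConeCauchy, hev]
  exact ⟨hC.tendsto_nhds_zero hint (fun p => hcn.nonneg _),
    fun h _ hε => h.eventually_sub_mem_interior hε⟩

end Cone

section FiniteDimensional

variable {α F : Type*} [NormedAddCommGroup E] [NormedSpace ℝ E] {C : Set E} {K : ℝ}
variable [NormedAddCommGroup F] [NormedSpace ℝ F] [FiniteDimensional ℝ F] {cn : F → E}

theorem IsConeNorm.exists_norm_le (hC : IsNormalCone C K) (hcn : IsConeNorm C cn) :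
    ∃ c, ∀ v, ‖cn v‖ ≤ c * ‖v‖ := by
  let b := Module.finBasis ℝ F
  let L : F →L[ℝ] Fin (Module.finrank ℝ F) → ℝ := b.equivFunL
  refine ⟨K * ∑ i, ‖L‖ * ‖cn (b i)‖, fun v => ?_⟩
  have hcoord : ∀ i, |b.equivFun v i| ≤ ‖L‖ * ‖v‖ := fun i =>
    calc |b.equivFun v i| ≤ ‖L v‖ := by
          rw [← Real.norm_eq_abs]; exact norm_le_pi_norm (L v) i
      _ ≤ ‖L‖ * ‖v‖ := L.le_opNorm v
  calc ‖cn v‖ = ‖cn (∑ i, b.equivFun v i • b i)‖ := by rw [b.sum_equivFun]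
    _ ≤ K * ∑ i, |b.equivFun v i| * ‖cn (b i)‖ := by
      simpa only [hcn.norm_smul] using
        hcn.norm_sum_le hC Finset.univ fun i => b.equivFun v i • b i
    _ ≤ K * ∑ i, ‖L‖ * ‖v‖ * ‖cn (b i)‖ := by
      gcongr with i
      · exact hC.K_pos.le
      · exact hcoord i
    _ = (K * ∑ i, ‖L‖ * ‖cn (b i)‖) * ‖v‖ := by
      rw [mul_assoc, Finset.sum_mul]
      congr 1
      exact Finset.sum_congr rfl fun i _ => by ring

theorem IsConeNorm.continuous (hC : IsNormalCone C K) (hcn : IsConeNorm C cn) :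
    Continuous cn := by
  obtain ⟨c, hc⟩ := hcn.exists_norm_le hC
  refine (LipschitzWith.of_dist_le' (K := (2 * K + 1) * c) fun x y => ?_).continuous
  rw [dist_eq_norm, dist_eq_norm, mul_assoc]
  exact (hcn.norm_sub_le hC x y).trans
    (mul_le_mul_of_nonneg_left (hc _) (by linarith [hC.K_pos]))

/-- The continuous function `‖cn ·‖` has a positive minimum on the unit sphere. -/
theorem IsConeNorm.exists_pos_mul_norm_le (hC : IsNormalCone C K) (hcn : IsConeNorm C cn) :
    ∃ m > 0, ∀ v, m * ‖v‖ ≤ ‖cn v‖ := by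
  have hpos : ∀ u ∈ Metric.sphere (0 : F) 1, 0 < ‖cn u‖ := fun u hu =>
    norm_pos_iff.2 fun h => ne_zero_of_mem_unit_sphere ⟨u, hu⟩ ((hcn.eq_zero_iff u).1 h)
  obtain ⟨m, hm, hmin⟩ := (isCompact_sphere (0 : F) 1).exists_forall_le'
    (continuous_norm.comp (hcn.continuous hC)).continuousOn hpos
  refine ⟨m, hm, fun v => ?_⟩
  rcases eq_or_ne v 0 with rfl | hv
  · simp
  have hu : ‖v‖⁻¹ • v ∈ Metric.sphere (0 : F) 1 := by
    simp [_root_.norm_smul, hv]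
  calc m * ‖v‖ ≤ ‖cn (‖v‖⁻¹ • v)‖ * ‖v‖ := by gcongr; exact hmin _ hu
    _ = ‖cn v‖ := by
      rw [hcn.norm_smul, abs_inv, abs_norm]
      field_simp [norm_ne_zero_iff.2 hv]

theorem IsConeNorm.tendsto_nhds_zero_iff (hC : IsNormalCone C K) (hcn : IsConeNorm C cn)
    {l : Filter α} {g : α → F} : Tendsto (fun a => cn (g a)) l (𝓝 0) ↔ Tendsto g l (𝓝 0) := by
  constructor
  · intro h
    obtain ⟨m, hm, hle⟩ := hcn.exists_pos_mul_norm_le hC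
    refine squeeze_zero_norm (a := fun a => m⁻¹ * ‖cn (g a)‖) (fun a => ?_) ?_
    · rw [le_inv_mul_iff₀ hm]; exact hle _
    · simpa using h.norm.const_mul m⁻¹
  · intro h
    exact ((hcn.continuous hC).tendsto' 0 0 hcn.map_zero).comp h

theorem IsConeNorm.exists_coneTendsto_of_coneCauchy (hC : IsNormalCone C K)
    (hint : (interior C).Nonempty) (hcn : IsConeNorm C cn) {x : ℕ → F}
    (hx : ConeCauchy C cn x) : ∃ l, ConeTendsto C cn x l := by
  rw [hcn.coneCauchy_iff hC hint, hcn.tendsto_nhds_zero_iff hC] at hx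
  have : CompleteSpace F := FiniteDimensional.complete ℝ F
  obtain ⟨l, hl⟩ := cauchySeq_tendsto_of_complete <|
    cauchySeq_iff_tendsto_dist_atTop_0 (u := x) |>.2 (by simpa [dist_eq_norm'] using hx.norm)
  exact ⟨l, (hcn.coneTendsto_iff hC hint).2 <|
    (hcn.tendsto_nhds_zero_iff hC).2 (tendsto_sub_nhds_zero_iff.2 hl)⟩

end FiniteDimensional

section
variable [NormedAddCommGroup E] [NormedSpace ℝ E] [CompleteSpace E]
variable [AddCommGroup V] [Module ℝ V]

theorem finiteDimensional_coneComplete (C : Set E) (K : ℝ)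
    (hC : IsNormalCone C K) (hint : (interior C).Nonempty)
    (cn : V → E) (hcn : IsConeNorm C cn)
    [FiniteDimensional ℝ V] :
    ∀ x : ℕ → V, ConeCauchy C cn x → ∃ l : V, ConeTendsto C cn x l := by
  intro x hx
  let e := (Module.finBasis ℝ V).equivFun
  let : NormedAddCommGroup V := NormedAddCommGroup.induced V _ e e.injective
  let : NormedSpace ℝ V := NormedSpace.induced ℝ V _ e
  exact hcn.exists_coneTendsto_of_coneCauchy hC hint hx

end
end

section
/- Let V be a finite dimensional cone normed linear space over a Banach space E with normal cone C of normal constant K. If a subset M of V is closed (limits of convergent sequences of M lie in M) and bounded (M ⊆ B_p(b) for some b ∈ V, p ≫ θ), then M is compact: every sequence in M has a subsequence converging to a point of M. -/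
open Filter Topology Pointwise

set_option linter.unusedSectionVars false

variable {E V : Type*}

section
variable [NormedAddCommGroup E] [NormedSpace ℝ E] [CompleteSpace E]
variable [AddCommGroup V] [Module ℝ V]

/-- A positive scalar multiple of an interior point of a cone is interior. -/
lemma aux_smul_interior {C : Set E} (hC : IsCone C) {t : ℝ} (ht : 0 < t)
    {ε : E} (hε : ε ∈ interior C) : t • ε ∈ interior C := by
  have hsub : t • interior C ⊆ C := by
    rintro _ ⟨y, hy, rfl⟩
    have hyC : y ∈ C := interior_subset hy
    have := hC.combo_mem t 0 ht.le le_rfl y hyC y hyC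
    simpa using this
  have hopen : IsOpen (t • interior C) := isOpen_interior.smul₀ ht.ne'
  exact interior_maximal hsub hopen ⟨ε, hε, rfl⟩

/-- Around an interior point, small perturbations stay interior. -/
lemma aux_ball_interior {C : Set E} {ε : E} (hε : ε ∈ interior C) :
    ∃ δ > 0, ∀ v : E, ‖v‖ < δ → ε - v ∈ interior C := by
  obtain ⟨δ, hδ, hball⟩ := Metric.isOpen_iff.mp isOpen_interior ε hε
  refine ⟨δ, hδ, fun v hv => hball ?_⟩
  have : dist (ε - v) ε = ‖v‖ := by
    rw [dist_eq_norm]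
    simp [norm_neg]
  simpa [Metric.mem_ball, this] using hv

/-- Cone-norm convergence is equivalent to convergence of the real norms. -/
lemma aux_coneTendsto_iff {C : Set E} {K : ℝ} (hC : IsNormalCone C K)
    (hint : (interior C).Nonempty) {cn : V → E} (hcn : IsConeNorm C cn)
    (x : ℕ → V) (l : V) :
    ConeTendsto C cn x l ↔ Tendsto (fun n => ‖cn (x n - l)‖) atTop (𝓝 0) := by
  obtain ⟨e₀, he₀⟩ := hint
  constructor
  · intro h
    rw [Metric.tendsto_atTop]
    intro δ hδ
    set t : ℝ := δ / (2 * K * (‖e₀‖ + 1)) with ht_def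
    have hden : 0 < 2 * K * (‖e₀‖ + 1) := by nlinarith [hC.K_pos, norm_nonneg e₀]
    have ht : 0 < t := div_pos hδ hden
    obtain ⟨n₀, hn₀⟩ := h (t • e₀) (aux_smul_interior hC.toIsCone ht he₀)
    refine ⟨n₀, fun n hn => ?_⟩
    have h1 : ‖cn (x n - l)‖ ≤ K * ‖t • e₀‖ :=
      hC.normal _ _ (hcn.nonneg _) (interior_subset (hn₀ n hn))
    have h2 : ‖t • e₀‖ = t * ‖e₀‖ := by
      rw [norm_smul, Real.norm_eq_abs, abs_of_pos ht]
    have hK := hC.K_pos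
    have hlt : K * (t * ‖e₀‖) < δ := by
      have h : K * ‖e₀‖ < 2 * K * (‖e₀‖ + 1) := by nlinarith [norm_nonneg e₀, hC.K_pos]
      calc K * (t * ‖e₀‖) = (K * ‖e₀‖) * (δ / (2 * K * (‖e₀‖ + 1))) := by rw [ht_def]; ring
        _ < (2 * K * (‖e₀‖ + 1)) * (δ / (2 * K * (‖e₀‖ + 1))) :=
            mul_lt_mul_of_pos_right h (div_pos hδ hden)
        _ = δ := by rw [mul_comm, div_mul_cancel₀ _ hden.ne']
    have : ‖cn (x n - l)‖ < δ := by
      rw [h2] at h1; linarith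
    simpa [Real.dist_eq, abs_of_nonneg (norm_nonneg _)] using this
  · intro h ε hε
    obtain ⟨δ, hδ, hball⟩ := aux_ball_interior hε
    rw [Metric.tendsto_atTop] at h
    obtain ⟨n₀, hn₀⟩ := h δ hδ
    refine ⟨n₀, fun n hn => hball _ ?_⟩
    have := hn₀ n hn
    rwa [Real.dist_eq, sub_zero, abs_of_nonneg (norm_nonneg _)] at this

/-- Quasi-triangle inequality for the scalarized cone norm. -/
lemma aux_quasi {C : Set E} {K : ℝ} (hC : IsNormalCone C K)
    {cn : V → E} (hcn : IsConeNorm C cn) (x y : V) :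
    ‖cn (x + y)‖ ≤ K * (‖cn x‖ + ‖cn y‖) :=
  le_trans (hC.normal _ _ (hcn.nonneg _) (hcn.triangle x y))
    (mul_le_mul_of_nonneg_left (norm_add_le _ _) hC.K_pos.le)

lemma aux_cn_zero {C : Set E} {cn : V → E} (hcn : IsConeNorm C cn) :
    cn 0 = 0 := (hcn.eq_zero_iff 0).mpr rfl

lemma aux_cn_smul {C : Set E} {cn : V → E} (hcn : IsConeNorm C cn)
    (α : ℝ) (x : V) : ‖cn (α • x)‖ = |α| * ‖cn x‖ := by
  rw [hcn.smul, norm_smul, Real.norm_eq_abs, abs_abs]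

/-- Iterated quasi-triangle inequality. -/
lemma aux_sum_bound {C : Set E} {K : ℝ} (hC : IsNormalCone C K)
    {cn : V → E} (hcn : IsConeNorm C cn) :
    ∀ (n : ℕ) (v : Fin n → V),
      ‖cn (∑ i, v i)‖ ≤ (max K 1) ^ n * ∑ i, ‖cn (v i)‖ := by
  intro n
  induction n with
  | zero => intro v; simp [aux_cn_zero hcn]
  | succ n ih =>
    intro v
    set K' := max K 1 with hK'def
    have hK'1 : 1 ≤ K' := le_max_right _ _
    have hKK' : K ≤ K' := le_max_left _ _
    have hK'n : 1 ≤ K' ^ n := one_le_pow₀ hK'1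
    rw [Fin.sum_univ_succ]
    have h1 := aux_quasi hC hcn (v 0) (∑ i : Fin n, v i.succ)
    have h2 := ih (fun i => v i.succ)
    have ha : (0:ℝ) ≤ ‖cn (v 0)‖ := norm_nonneg _
    have hS : (0:ℝ) ≤ ∑ i : Fin n, ‖cn (v i.succ)‖ :=
      Finset.sum_nonneg fun i _ => norm_nonneg _
    have hK'0 : (0:ℝ) < K' := lt_of_lt_of_le one_pos hK'1
    calc ‖cn (v 0 + ∑ i : Fin n, v i.succ)‖
        ≤ K * (‖cn (v 0)‖ + ‖cn (∑ i : Fin n, v i.succ)‖) := h1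
      _ ≤ K' * (‖cn (v 0)‖ + K' ^ n * ∑ i : Fin n, ‖cn (v i.succ)‖) := by
          nlinarith [norm_nonneg (cn (∑ i : Fin n, v i.succ)), hC.K_pos]
      _ ≤ K' ^ (n + 1) * (‖cn (v 0)‖ + ∑ i : Fin n, ‖cn (v i.succ)‖) := by
          rw [pow_succ]
          nlinarith [mul_nonneg (sub_nonneg.mpr hK'n) ha]
      _ = K' ^ (n + 1) * ∑ i : Fin (n + 1), ‖cn (v i)‖ := by
          rw [Fin.sum_univ_succ]

/-- The scalarized cone norm is dominated by the coordinate norm. -/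
lemma aux_upper {C : Set E} {K : ℝ} (hC : IsNormalCone C K)
    {cn : V → E} (hcn : IsConeNorm C cn) [FiniteDimensional ℝ V] :
    ∃ c > 0, ∀ x : V,
      ‖cn x‖ ≤ c * ‖(Module.finBasis ℝ V).equivFun x‖ := by
  set d := Module.finrank ℝ V
  set b := Module.finBasis ℝ V
  refine ⟨(max K 1) ^ d * (∑ i, ‖cn (b i)‖) + 1, by positivity, fun x => ?_⟩
  have hx : (∑ i, b.equivFun x i • b i) = x := b.sum_equivFun x
  calc ‖cn x‖ = ‖cn (∑ i, b.equivFun x i • b i)‖ := by rw [hx]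
    _ ≤ (max K 1) ^ d * ∑ i, ‖cn (b.equivFun x i • b i)‖ :=
        aux_sum_bound hC hcn d _
    _ = (max K 1) ^ d * ∑ i, |b.equivFun x i| * ‖cn (b i)‖ := by
        simp only [aux_cn_smul hcn]
    _ ≤ (max K 1) ^ d * ∑ i, ‖b.equivFun x‖ * ‖cn (b i)‖ := by
        apply mul_le_mul_of_nonneg_left _ (by positivity)
        apply Finset.sum_le_sum
        intro i _
        apply mul_le_mul_of_nonneg_right _ (norm_nonneg _)
        have := norm_le_pi_norm (b.equivFun x) i
        simpa [Real.norm_eq_abs] using this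
    _ = (max K 1) ^ d * (∑ i, ‖cn (b i)‖) * ‖b.equivFun x‖ := by
        rw [← Finset.mul_sum]; ring
    _ ≤ ((max K 1) ^ d * (∑ i, ‖cn (b i)‖) + 1) * ‖b.equivFun x‖ := by
        apply mul_le_mul_of_nonneg_right _ (norm_nonneg _)
        linarith
    _ = _ := rfl

/-- The scalarized cone norm dominates a multiple of the coordinate norm. -/
lemma aux_lower {C : Set E} {K : ℝ} (hC : IsNormalCone C K)
    {cn : V → E} (hcn : IsConeNorm C cn) [FiniteDimensional ℝ V] :
    ∃ c > 0, ∀ x : V,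
      c * ‖(Module.finBasis ℝ V).equivFun x‖ ≤ ‖cn x‖ := by
  obtain ⟨c, hc, hupper⟩ := aux_upper hC hcn
  set b := Module.finBasis ℝ V with hb
  by_contra hcon
  push_neg at hcon
  have hseq : ∀ n : ℕ, ∃ x : V,
      ‖cn x‖ < (1 / (n + 1)) * ‖b.equivFun x‖ := by
    intro n
    obtain ⟨x, hx⟩ := hcon (1 / (n + 1)) (by positivity)
    exact ⟨x, hx⟩
  choose x hxlt using hseq
  have hpos : ∀ n, 0 < ‖b.equivFun (x n)‖ := by
    intro n
    by_contra h
    push_neg at h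
    have h0 : ‖b.equivFun (x n)‖ = 0 := le_antisymm h (norm_nonneg _)
    have := hxlt n
    rw [h0, mul_zero] at this
    exact absurd this (not_lt.mpr (norm_nonneg _))
  set y : ℕ → V := fun n => (‖b.equivFun (x n)‖)⁻¹ • x n with hy
  have hey : ∀ n, b.equivFun (y n) = (‖b.equivFun (x n)‖)⁻¹ • b.equivFun (x n) := by
    intro n; simp [hy, map_smul]
  have hynorm : ∀ n, ‖b.equivFun (y n)‖ = 1 := by
    intro n
    rw [hey n, norm_smul, Real.norm_eq_abs, abs_of_pos (inv_pos.mpr (hpos n)),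
      inv_mul_cancel₀ (hpos n).ne']
  have hcny : ∀ n, ‖cn (y n)‖ < 1 / (n + 1) := by
    intro n
    rw [hy]
    rw [aux_cn_smul hcn]
    rw [abs_of_pos (inv_pos.mpr (hpos n))]
    have := hxlt n
    rw [inv_mul_lt_iff₀ (hpos n)]
    calc ‖cn (x n)‖ < (1 / (n + 1)) * ‖b.equivFun (x n)‖ := this
      _ = ‖b.equivFun (x n)‖ * (1 / (n + 1)) := by ring
  -- Bolzano–Weierstrass on the coordinate sequence
  have hbnd : ∀ n, b.equivFun (y n) ∈ Metric.closedBall (0 : Fin (Module.finrank ℝ V) → ℝ) 1 := by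
    intro n
    rw [Metric.mem_closedBall, dist_zero_right, hynorm n]
  obtain ⟨a, _, φ, hφ, htend⟩ :=
    tendsto_subseq_of_bounded Metric.isBounded_closedBall hbnd
  have hanorm : ‖a‖ = 1 := by
    have h1 : Tendsto (fun n => ‖b.equivFun (y (φ n))‖) atTop (𝓝 ‖a‖) :=
      (continuous_norm.continuousAt.tendsto.comp htend)
    have h2 : (fun n => ‖b.equivFun (y (φ n))‖) = fun _ => (1:ℝ) := by
      funext n; exact hynorm (φ n)
    rw [h2] at h1
    exact (tendsto_const_nhds_iff.mp h1).symm
  set l : V := b.equivFun.symm a with hl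
  have hel : b.equivFun l = a := b.equivFun.apply_symm_apply a
  have hlne : l ≠ 0 := by
    intro h
    rw [h] at hel
    simp at hel
    rw [← hel] at hanorm
    simp at hanorm
  -- show cn l = 0, contradiction
  have hbound : ∀ n, ‖cn l‖ ≤
      K * (c * ‖a - b.equivFun (y (φ n))‖ + 1 / (φ n + 1)) := by
    intro n
    have h1 : (l - y (φ n)) + y (φ n) = l := by abel
    have h2 := aux_quasi hC hcn (l - y (φ n)) (y (φ n))
    have h3 : ‖cn (l - y (φ n))‖ ≤ c * ‖b.equivFun (l - y (φ n))‖ := hupper _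
    have h4 : b.equivFun (l - y (φ n)) = a - b.equivFun (y (φ n)) := by
      rw [map_sub, hel]
    have h5 := (hcny (φ n)).le
    rw [h4] at h3
    rw [← h1]
    calc ‖cn ((l - y (φ n)) + y (φ n))‖
        ≤ K * (‖cn (l - y (φ n))‖ + ‖cn (y (φ n))‖) := h2
      _ ≤ K * (c * ‖a - b.equivFun (y (φ n))‖ + 1 / (φ n + 1)) := by
          apply mul_le_mul_of_nonneg_left _ hC.K_pos.le
          exact add_le_add h3 h5
  have htend0 : Tendsto
      (fun n => K * (c * ‖a - b.equivFun (y (φ n))‖ + 1 / (φ n + 1)))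
      atTop (𝓝 (K * (c * 0 + 0))) := by
    apply Tendsto.const_mul
    apply Tendsto.add
    · apply Tendsto.const_mul
      have : Tendsto (fun n => b.equivFun (y (φ n)) - a) atTop (𝓝 0) := by
        simpa using htend.sub_const a
      have := this.norm
      simp only [norm_zero] at this
      have heq : (fun n => ‖a - b.equivFun (y (φ n))‖)
          = fun n => ‖b.equivFun (y (φ n)) - a‖ := by
        funext n; rw [norm_sub_rev]
      rw [heq]
      exact this
    · have h1 : Tendsto (fun n : ℕ => 1 / ((n : ℝ) + 1)) atTop (𝓝 0) :=
        tendsto_one_div_add_atTop_nhds_zero_nat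
      exact h1.comp hφ.tendsto_atTop
  have hle : ‖cn l‖ ≤ K * (c * 0 + 0) := ge_of_tendsto htend0 (.of_forall hbound)
  simp at hle
  exact hlne ((hcn.eq_zero_iff l).mp hle)

theorem closed_bounded_compact (C : Set E) (K : ℝ)
    (hC : IsNormalCone C K) (hint : (interior C).Nonempty)
    (cn : V → E) (hcn : IsConeNorm C cn)
    [FiniteDimensional ℝ V] (M : Set V)
    (hclosed : ∀ (x : ℕ → V) (l : V), (∀ n, x n ∈ M) →
      ConeTendsto C cn x l → l ∈ M)
    (hbdd : ∃ (b : V) (p : E), p ∈ interior C ∧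
      ∀ y ∈ M, p - cn (y - b) ∈ interior C) :
    ∀ x : ℕ → V, (∀ n, x n ∈ M) →
      ∃ (φ : ℕ → ℕ), StrictMono φ ∧ ∃ l ∈ M, ConeTendsto C cn (x ∘ φ) l := by
  intro x hx
  obtain ⟨b0, p, hp, hbd⟩ := hbdd
  obtain ⟨c, hc, hupper⟩ := aux_upper hC hcn (cn := cn)
  obtain ⟨c', hc', hlower⟩ := aux_lower hC hcn (cn := cn)
  set bb := Module.finBasis ℝ V with hbb
  -- M is bounded in coordinates
  have hMb : ∀ yv ∈ M, ‖bb.equivFun (yv - b0)‖ ≤ K * ‖p‖ / c' := by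
    intro yv hyv
    have h1 : ‖cn (yv - b0)‖ ≤ K * ‖p‖ :=
      hC.normal _ _ (hcn.nonneg _) (interior_subset (hbd yv hyv))
    have h2 := hlower (yv - b0)
    rw [le_div_iff₀ hc', mul_comm]
    linarith
  set R := K * ‖p‖ / c' with hR
  have hmem : ∀ n, bb.equivFun (x n) ∈ Metric.closedBall (bb.equivFun b0) R := by
    intro n
    rw [Metric.mem_closedBall, dist_eq_norm, ← map_sub]
    exact hMb (x n) (hx n)
  obtain ⟨a, _, φ, hφ, htend⟩ :=
    tendsto_subseq_of_bounded Metric.isBounded_closedBall hmem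
  set l : V := bb.equivFun.symm a with hl
  have hel : bb.equivFun l = a := bb.equivFun.apply_symm_apply a
  have hnorm0 : Tendsto (fun n => ‖cn ((x ∘ φ) n - l)‖) atTop (𝓝 0) := by
    apply squeeze_zero (fun n => norm_nonneg _)
      (g := fun n => c * ‖bb.equivFun (x (φ n)) - a‖)
    · intro n
      have h1 := hupper ((x ∘ φ) n - l)
      have h2 : bb.equivFun ((x ∘ φ) n - l) = bb.equivFun (x (φ n)) - a := by
        rw [map_sub, hel]; rfl
      rw [h2] at h1
      exact h1
    · have : Tendsto (fun n => bb.equivFun (x (φ n)) - a) atTop (𝓝 0) := by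
        simpa using htend.sub_const a
      have := this.norm
      simp only [norm_zero] at this
      simpa using this.const_mul c
  have hct : ConeTendsto C cn (x ∘ φ) l :=
    (aux_coneTendsto_iff hC hint hcn (x ∘ φ) l).mpr hnorm0
  have hlM : l ∈ M := hclosed (x ∘ φ) l (fun n => hx (φ n)) hct
  exact ⟨φ, hφ, l, hlM, hct⟩
end
end
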